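/- arXiv:2403.09995 — 3 statements merged into one kernel-verified Lean document; each statement's English description precedes it below -/
import Mathlib

section
/- For an odd prime p and n ≥ 1, the number of orbits of the Borel subgroup Γ₀(ℤ/pⁿℤ) acting on ℙ¹(ℤ/pⁿℤ) is exactly 2n. -/
/-!
Every point of `ℙ¹(R)`, `R = ℤ/pⁿℤ`, is either `[t : 1]`, and these form the `Γ₀`-orbit of
`[0 : 1]`, or `[1 : r]` with `r ∈ pR`. The matrix `(a b; 0 a⁻¹)` sends `[1 : r]` to
`[1 : a⁻²(1 + a⁻¹br)⁻¹ r]`, and since `p` is odd every element of `1 + pR` is a square (the kernel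
of `(ℤ/pⁿℤ)ˣ → (ℤ/pℤ)ˣ` has odd order `pⁿ⁻¹`). Hence the orbits of the points `[1 : r]` are the
classes of `r ∈ pR` under multiplication by squares of units: `{0}` and, for each `1 ≤ k < n`, the
two classes of the `pᵏw` (`w` a unit) told apart by whether `w` is a square mod `p`. This gives
`1 + 1 + 2(n - 1) = 2n` orbits.
-/

open Matrix

/-- The Borel subgroup `Γ₀(R)` of upper triangular matrices in `SL₂(R)`. -/
def Gamma0 (R : Type*) [CommRing R] : Subgroup (Matrix.SpecialLinearGroup (Fin 2) R) where
  carrier := {A | A.1 1 0 = 0}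
  one_mem' := by simp [Matrix.one_apply]
  mul_mem' := by
    intro a b ha hb
    simp only [Set.mem_setOf_eq] at *
    have : ((a * b : Matrix.SpecialLinearGroup (Fin 2) _)).1 1 0
        = a.1 1 0 * b.1 0 0 + a.1 1 1 * b.1 1 0 := by
      simp [Matrix.mul_apply, Fin.sum_univ_two]
    rw [this, ha, hb]; ring
  inv_mem' := by
    intro a ha
    simp only [Set.mem_setOf_eq] at *
    rw [Matrix.SpecialLinearGroup.SL2_inv_expl]
    simp [ha]

/-- A pair is unimodular (over a local ring) if one of its entries is a unit. -/
def IsUnimodular {R : Type*} [CommRing R] (v : Fin 2 → R) : Prop :=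
  IsUnit (v 0) ∨ IsUnit (v 1)

def P1Setoid (R : Type*) [CommRing R] : Setoid {v : Fin 2 → R // IsUnimodular v} where
  r x y := ∃ u : Rˣ, u • x.1 = y.1
  iseqv := by
    refine ⟨fun x => ⟨1, one_smul _ _⟩, ?_, ?_⟩
    · rintro x y ⟨u, h⟩
      exact ⟨u⁻¹, by rw [← h, inv_smul_smul]⟩
    · rintro x y z ⟨u, h⟩ ⟨w, h2⟩
      exact ⟨w * u, by rw [← h2, ← h]; exact (smul_smul w u x.1).symm ▸ rfl⟩

/-- The projective line over `R`: unimodular pairs up to unit scaling. -/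
def P1 (R : Type*) [CommRing R] := Quotient (P1Setoid R)

def P1.mk {R : Type*} [CommRing R] (v : Fin 2 → R) (h : IsUnimodular v) : P1 R :=
  Quotient.mk (P1Setoid R) ⟨v, h⟩

theorem isUnimodular_mulVec {R : Type*} [CommRing R] [IsLocalRing R]
    (g : Matrix.SpecialLinearGroup (Fin 2) R) {v : Fin 2 → R} (hv : IsUnimodular v) :
    IsUnimodular (g.1.mulVec v) := by
  by_contra h
  rw [IsUnimodular, not_or] at h
  obtain ⟨h0, h1⟩ := h
  have hv' : v = (g⁻¹).1.mulVec (g.1.mulVec v) := by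
    rw [Matrix.mulVec_mulVec, ← Matrix.SpecialLinearGroup.coe_mul, inv_mul_cancel]
    simp
  have key : ∀ i, ¬ IsUnit (v i) := by
    intro i
    rw [hv']
    have hexp : (g⁻¹).1.mulVec (g.1.mulVec v) i
        = (g⁻¹).1 i 0 * (g.1.mulVec v 0) + (g⁻¹).1 i 1 * (g.1.mulVec v 1) := by
      simp only [Matrix.mulVec, dotProduct, Fin.sum_univ_two]
    rw [hexp]
    intro hu
    have m0 : (g⁻¹).1 i 0 * (g.1.mulVec v 0) ∈ nonunits R := by
      intro hc
      exact h0 (isUnit_of_mul_isUnit_right hc)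
    have m1 : (g⁻¹).1 i 1 * (g.1.mulVec v 1) ∈ nonunits R := by
      intro hc
      exact h1 (isUnit_of_mul_isUnit_right hc)
    exact (IsLocalRing.nonunits_add m0 m1) hu
  rcases hv with h | h
  · exact key 0 h
  · exact key 1 h

noncomputable instance P1.smul {R : Type*} [CommRing R] [IsLocalRing R] :
    SMul (Matrix.SpecialLinearGroup (Fin 2) R) (P1 R) where
  smul g := Quotient.map
    (fun v => ⟨g.1.mulVec v.1, isUnimodular_mulVec g v.2⟩)
    (by
      rintro x y ⟨u, h⟩
      refine ⟨u, ?_⟩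
      simp only [← h]
      rw [Units.smul_def, Units.smul_def, Matrix.mulVec_smul])

theorem P1.smul_mk {R : Type*} [CommRing R] [IsLocalRing R]
    (g : Matrix.SpecialLinearGroup (Fin 2) R) (v : Fin 2 → R) (h : IsUnimodular v) :
    g • (P1.mk v h) = P1.mk (g.1.mulVec v) (isUnimodular_mulVec g h) := rfl

noncomputable instance P1.mulAction {R : Type*} [CommRing R] [IsLocalRing R] :
    MulAction (Matrix.SpecialLinearGroup (Fin 2) R) (P1 R) where
  one_smul := by
    intro x
    induction x using Quotient.ind with
    | _ v =>
      show Quotient.map _ _ _ = _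
      rw [Quotient.map_mk]
      congr 1
      exact Subtype.ext (by simp)
  mul_smul := by
    intro g h x
    induction x using Quotient.ind with
    | _ v =>
      show Quotient.map _ _ _ = Quotient.map _ _ (Quotient.map _ _ _)
      rw [Quotient.map_mk, Quotient.map_mk, Quotient.map_mk]
      congr 1
      exact Subtype.ext (by simp [Matrix.mul_apply, Fin.sum_univ_two] <;> (try constructor) <;> ring)

theorem zmod_pow_isUnit_iff (p : ℕ) [hp : Fact p.Prime] (n : ℕ) [NeZero n]
    (x : ZMod (p^n)) : IsUnit x ↔ ¬ (p ∣ x.val) := by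
  haveI : NeZero (p^n) := ⟨pow_ne_zero n hp.out.ne_zero⟩
  conv_lhs => rw [← ZMod.natCast_rightInverse x]
  rw [ZMod.isUnit_iff_coprime]
  rw [Nat.coprime_pow_right_iff (Nat.pos_of_ne_zero (NeZero.ne n))]
  rw [Nat.coprime_comm]
  exact hp.out.coprime_iff_not_dvd

instance zmod_pow_isLocalRing (p : ℕ) [hp : Fact p.Prime] (n : ℕ) [NeZero n] :
    IsLocalRing (ZMod (p^n)) := by
  haveI : NeZero (p^n) := ⟨pow_ne_zero n hp.out.ne_zero⟩
  haveI : Fact (1 < p^n) :=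
    ⟨Nat.one_lt_pow (NeZero.ne n) hp.out.one_lt⟩
  refine IsLocalRing.of_nonunits_add ?_
  intro a b ha hb
  rw [mem_nonunits_iff, zmod_pow_isUnit_iff, not_not] at ha hb ⊢
  rw [ZMod.val_add]
  rw [Nat.dvd_mod_iff (dvd_pow_self p (NeZero.ne n))]
  exact Nat.dvd_add ha hb

theorem isUnimodular_pair_left {R : Type*} [CommRing R] {a b : R} (h : IsUnit a) :
    IsUnimodular ![a, b] := Or.inl (by simpa using h)

theorem isUnimodular_pair_right {R : Type*} [CommRing R] {a b : R} (h : IsUnit b) :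
    IsUnimodular ![a, b] := Or.inr (by simpa using h)

open MulAction IsLocalRing

theorem MulAction.card_orbitRel_quotient_eq_card_range {G X β : Type*} [Group G] [MulAction G X]
    (f : X → β) (hf : ∀ x y, x ∈ orbit G y ↔ f x = f y) :
    Nat.card (orbitRel.Quotient G X) = Nat.card (Set.range f) :=
  Nat.card_congr ((Quotient.congrRight hf).trans (Setoid.quotientKerEquivRange f))

theorem isSquare_of_coprime_card_two {G : Type*} [Group G] (h : (Nat.card G).Coprime 2) (g : G) :
    IsSquare g :=
  ⟨(powCoprime h).symm g, by rw [← sq, ← powCoprime_apply h, Equiv.apply_symm_apply]⟩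

theorem isSquare_mul_self_mul_iff {F : Type*} [Field F] {c : F} (hc : c ≠ 0) (a : F) :
    IsSquare (c * c * a) ↔ IsSquare a := by
  refine ⟨fun ⟨t, ht⟩ => ⟨c⁻¹ * t, ?_⟩, fun ⟨t, ht⟩ => ⟨c * t, by rw [ht]; ring⟩⟩
  calc a = c⁻¹ * c⁻¹ * (c * c * a) := by field_simp
    _ = c⁻¹ * t * (c⁻¹ * t) := by rw [ht]; ring

theorem FiniteField.isSquare_mul_of_isSquare_iff {F : Type*} [Field F] [Fintype F] {a b : F}
    (ha : a ≠ 0) (hb : b ≠ 0) (h : IsSquare a ↔ IsSquare b) : IsSquare (a * b) := by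
  classical
  have hχ : quadraticChar F a = quadraticChar F b := by
    rw [← quadraticChar_one_iff_isSquare ha, ← quadraticChar_one_iff_isSquare hb] at h
    rcases quadraticChar_dichotomy ha with h1 | h1 <;>
      rcases quadraticChar_dichotomy hb with h2 | h2 <;> simp only [h1, h2] at h ⊢ <;> norm_num at h
  rw [← quadraticChar_one_iff_isSquare (mul_ne_zero ha hb), map_mul, hχ, ← sq,
    quadraticChar_sq_one hb]

namespace P1

variable {R : Type*} [CommRing R]

theorem mk_eq_mk_iff {v w : Fin 2 → R} (hv : IsUnimodular v) (hw : IsUnimodular w) :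
    P1.mk v hv = P1.mk w hw ↔ ∃ u : Rˣ, u • v = w :=
  Quotient.eq

theorem mk_eq_mk_of_eq_smul {v w : Fin 2 → R} (hv : IsUnimodular v) (hw : IsUnimodular w) (u : Rˣ)
    (h : w = u • v) : P1.mk w hw = P1.mk v hv := by
  subst h
  exact Quotient.sound ⟨u⁻¹, inv_smul_smul u v⟩

theorem mk_one_inj {r r' : R} :
    P1.mk ![1, r] (isUnimodular_pair_left isUnit_one) =
      P1.mk ![1, r'] (isUnimodular_pair_left isUnit_one) ↔ r = r' := by
  refine ⟨fun h => ?_, fun h => h ▸ rfl⟩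
  obtain ⟨u, hu⟩ := (mk_eq_mk_iff _ _).mp h
  have hu1 : (u : R) = 1 := by simpa [Units.smul_def] using congrFun hu 0
  simpa [Units.smul_def, hu1] using congrFun hu 1

open Classical in
noncomputable def slope : P1 R → Option R :=
  Quotient.lift (fun v => if IsUnit (v.1 1) then none else some (v.1 1 * Ring.inverse (v.1 0))) (by
    rintro ⟨v, hv⟩ ⟨w, hw⟩ ⟨u, rfl⟩
    simp only [Pi.smul_apply, Units.smul_def, smul_eq_mul, Units.isUnit_units_mul]
    rw [Ring.mul_inverse_rev' (Commute.all _ _), Ring.inverse_unit]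
    split_ifs
    · rfl
    · simp only [Option.some.injEq]
      rw [mul_comm (u : R) (v 1), mul_assoc, mul_left_comm (u : R), Units.mul_inv, mul_one])

theorem slope_mk_right (t : R) :
    slope (P1.mk ![t, 1] (isUnimodular_pair_right isUnit_one)) = none := by
  simp [slope, P1.mk]

theorem slope_mk_one {r : R} (hr : ¬IsUnit r) :
    slope (P1.mk ![1, r] (isUnimodular_pair_left isUnit_one)) = some r := by
  simp [slope, P1.mk, hr]

theorem eq_mk_right_or_eq_mk_one [IsLocalRing R] (x : P1 R) :
    (∃ t, x = P1.mk ![t, 1] (isUnimodular_pair_right isUnit_one)) ∨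
      ∃ r ∈ maximalIdeal R, x = P1.mk ![1, r] (isUnimodular_pair_left isUnit_one) := by
  obtain ⟨⟨v, hv⟩, rfl⟩ := Quotient.exists_rep x
  by_cases h1 : IsUnit (v 1)
  · refine Or.inl ⟨↑h1.unit⁻¹ * v 0, (mk_eq_mk_of_eq_smul _ _ h1.unit⁻¹ ?_).symm⟩
    ext i
    fin_cases i <;> simp [Units.smul_def]
  · have h0 : IsUnit (v 0) := hv.resolve_right h1
    refine Or.inr ⟨↑h0.unit⁻¹ * v 1, Ideal.mul_mem_left _ _ ((mem_maximalIdeal _).mpr h1),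
      (mk_eq_mk_of_eq_smul _ _ h0.unit⁻¹ ?_).symm⟩
    ext i
    fin_cases i <;> simp [Units.smul_def]

theorem slope_mem_maximalIdeal [IsLocalRing R] {x : P1 R} {r : R}
    (h : P1.slope x = some r) : r ∈ maximalIdeal R := by
  rcases eq_mk_right_or_eq_mk_one x with ⟨t, rfl⟩ | ⟨r', hr', rfl⟩
  · simp [slope_mk_right] at h
  · rw [slope_mk_one ((mem_maximalIdeal _).mp hr'), Option.some_inj] at h
    rwa [← h]

end P1

namespace Gamma0

variable {R : Type*} [CommRing R]

def upper (a : Rˣ) (b : R) : Gamma0 R :=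
  ⟨⟨!![(a : R), b; 0, ↑a⁻¹], by simp [Matrix.det_fin_two_of]⟩,
    show !![(a : R), b; 0, ↑a⁻¹] 1 0 = 0 from rfl⟩

theorem exists_eq_upper (σ : Gamma0 R) : ∃ a b, σ = upper a b := by
  obtain ⟨⟨M, hM⟩, h10 : M 1 0 = 0⟩ := σ
  rw [Matrix.det_fin_two, h10, mul_zero, sub_zero] at hM
  refine ⟨Units.mkOfMulEqOne _ _ hM, M 0 1, ?_⟩
  ext i j
  fin_cases i <;> fin_cases j <;> simp [upper, h10, Units.mkOfMulEqOne]

variable [IsLocalRing R]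

theorem upper_smul_mk (a : Rˣ) (b : R) {v : Fin 2 → R} (hv : IsUnimodular v)
    (h : IsUnimodular ![a * v 0 + b * v 1, ↑a⁻¹ * v 1]) :
    upper a b • P1.mk v hv = P1.mk ![a * v 0 + b * v 1, ↑a⁻¹ * v 1] h := by
  change ((upper a b : Matrix.SpecialLinearGroup (Fin 2) R)) • P1.mk v hv = _
  rw [P1.smul_mk]
  congr 1
  ext i
  fin_cases i <;> simp [upper, Matrix.mulVec, dotProduct, Fin.sum_univ_two]

theorem mk_right_mem_orbit (t : R) :
    P1.mk ![t, 1] (isUnimodular_pair_right isUnit_one) ∈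
      orbit (Gamma0 R) (P1.mk ![0, 1] (isUnimodular_pair_right isUnit_one)) :=
  mem_orbit_iff.mpr ⟨upper 1 t, by
    rw [upper_smul_mk _ _ _ (by simpa using isUnimodular_pair_right isUnit_one)]; simp⟩

theorem mk_one_notMem_orbit_mk_right {r : R} (hr : r ∈ maximalIdeal R) (t : R) :
    P1.mk ![1, r] (isUnimodular_pair_left isUnit_one) ∉
      orbit (Gamma0 R) (P1.mk ![t, 1] (isUnimodular_pair_right isUnit_one)) := by
  intro h
  obtain ⟨σ, hσ⟩ := mem_orbit_iff.mp h
  obtain ⟨a, b, rfl⟩ := exists_eq_upper σ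
  rw [upper_smul_mk _ _ _ (by simpa using isUnimodular_pair_right (a⁻¹).isUnit),
    P1.mk_eq_mk_iff] at hσ
  obtain ⟨u, hu⟩ := hσ
  have hr' : ↑(u * a⁻¹) = r := by simpa [Units.smul_def] using congrFun hu 1
  exact (mem_maximalIdeal _).mp hr (hr' ▸ Units.isUnit _)

theorem upper_smul_mk_one (hsq : ∀ x ∈ maximalIdeal R, IsSquare (1 + x)) {r : R}
    (hr : r ∈ maximalIdeal R) (a : Rˣ) (b : R) :
    ∃ s : Rˣ, upper a b • P1.mk ![1, r] (isUnimodular_pair_left isUnit_one) =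
      P1.mk ![1, s * s * r] (isUnimodular_pair_left isUnit_one) := by
  have hx : ↑a⁻¹ * b * r ∈ maximalIdeal R := Ideal.mul_mem_left _ _ hr
  obtain ⟨t, ht⟩ := hsq _ hx
  have h1x : IsUnit (1 + ↑a⁻¹ * b * r) := by
    simpa using isUnit_one_sub_self_of_mem_nonunits _ (neg_mem hx)
  obtain ⟨T, rfl⟩ : IsUnit t := isUnit_of_mul_isUnit_left (ht ▸ h1x)
  -- `a + br = a T²`, so rescaling `[a + br : a⁻¹r]` by `(a T²)⁻¹` gives `[1 : (aT)⁻² r]`.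
  have hab : (a : R) + b * r = a * T * T := by
    rw [mul_assoc, ← ht, mul_add, mul_one, ← mul_assoc, ← mul_assoc, Units.mul_inv, one_mul]
  have hs : (a * T)⁻¹ * (a * T)⁻¹ = (a * T * T)⁻¹ * a⁻¹ := by
    rw [← mul_inv, ← mul_inv]
    ac_rfl
  refine ⟨(a * T)⁻¹, ?_⟩
  rw [upper_smul_mk _ _ _
    (by simpa [hab] using isUnimodular_pair_left (b := ↑a⁻¹ * r) (a * T * T).isUnit)]
  refine (P1.mk_eq_mk_of_eq_smul _ _ (a * T * T)⁻¹ ?_).symm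
  have hv : ![(a : R) * ![1, r] 0 + b * ![1, r] 1, ↑a⁻¹ * ![1, r] 1] =
      ![↑(a * T * T), ↑a⁻¹ * r] := by
    simp [hab]
  rw [hv, Matrix.smul_cons, Matrix.smul_cons, Matrix.smul_empty, Units.smul_def, Units.smul_def,
    smul_eq_mul, smul_eq_mul, Units.inv_mul, ← mul_assoc, ← Units.val_mul, ← Units.val_mul, hs]

theorem mk_one_mem_orbit_mk_one_iff (hsq : ∀ x ∈ maximalIdeal R, IsSquare (1 + x)) {r : R}
    (hr : r ∈ maximalIdeal R) (r' : R) :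
    P1.mk ![1, r'] (isUnimodular_pair_left isUnit_one) ∈
        orbit (Gamma0 R) (P1.mk ![1, r] (isUnimodular_pair_left isUnit_one)) ↔
      ∃ s : Rˣ, r' = s * s * r := by
  rw [mem_orbit_iff]
  constructor
  · rintro ⟨σ, hσ⟩
    obtain ⟨a, b, rfl⟩ := exists_eq_upper σ
    obtain ⟨s, hs⟩ := upper_smul_mk_one hsq hr a b
    exact ⟨s, (P1.mk_one_inj.mp (hs.symm.trans hσ)).symm⟩
  · rintro ⟨s, rfl⟩
    refine ⟨upper s⁻¹ 0, ?_⟩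
    rw [upper_smul_mk _ _ _ (by simpa using isUnimodular_pair_left (b := ↑s * r) s⁻¹.isUnit)]
    refine P1.mk_eq_mk_of_eq_smul _ _ s⁻¹ ?_
    ext i
    fin_cases i <;> simp [Units.smul_def, ← mul_assoc]

theorem mem_orbit_iff_slope (hsq : ∀ x ∈ maximalIdeal R, IsSquare (1 + x)) (x y : P1 R) :
    x ∈ orbit (Gamma0 R) y ↔
      Option.Rel (fun r r' : R => ∃ s : Rˣ, r' = s * s * r) (P1.slope y) (P1.slope x) := by
  rcases P1.eq_mk_right_or_eq_mk_one x with ⟨t, rfl⟩ | ⟨r, hr, rfl⟩ <;>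
    rcases P1.eq_mk_right_or_eq_mk_one y with ⟨t', rfl⟩ | ⟨r', hr', rfl⟩
  · simp only [P1.slope_mk_right, Option.Rel.none, iff_true]
    rw [orbit_eq_iff.mpr (mk_right_mem_orbit t')]
    exact mk_right_mem_orbit t
  · simp only [mem_orbit_symm, P1.slope_mk_one ((mem_maximalIdeal _).mp hr'), P1.slope_mk_right,
      Option.not_rel_some_none, iff_false]
    exact mk_one_notMem_orbit_mk_right hr' t
  · simp only [P1.slope_mk_right, P1.slope_mk_one ((mem_maximalIdeal _).mp hr),
      Option.not_rel_none_some, iff_false]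
    exact mk_one_notMem_orbit_mk_right hr t'
  · simp only [P1.slope_mk_one ((mem_maximalIdeal _).mp hr'),
      P1.slope_mk_one ((mem_maximalIdeal _).mp hr), Option.rel_some_some]
    exact mk_one_mem_orbit_mk_one_iff hsq hr' r

end Gamma0

variable (p n : ℕ) [NeZero n] in
def ZMod.residuePow : ZMod (p ^ n) →+* ZMod p :=
  ZMod.castHom (dvd_pow_self p (NeZero.ne n)) (ZMod p)

namespace ZMod

variable {p n : ℕ} [Fact p.Prime]

theorem le_of_pow_mul_eq_zero {k : ℕ} {w : ZMod (p ^ n)} (hw : IsUnit w)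
    (h : (p : ZMod (p ^ n)) ^ k * w = 0) : n ≤ k := by
  rw [hw.mul_left_eq_zero, ← Nat.cast_pow, natCast_eq_zero_iff] at h
  exact (Nat.pow_dvd_pow_iff_le_right (Fact.out : p.Prime).one_lt).mp h

theorem eq_pow_factorization_mul (r : ZMod (p ^ n)) :
    r = (p : ZMod (p ^ n)) ^ r.val.factorization p *
      ((r.val / p ^ r.val.factorization p : ℕ) : ZMod (p ^ n)) := by
  conv_lhs => rw [← natCast_zmod_val r, ← Nat.ordProj_mul_ordCompl_eq_self r.val p]
  push_cast
  rfl

variable [NeZero n]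

theorem residuePow_natCast_self : residuePow p n p = 0 := by
  rw [map_natCast, natCast_self]

theorem isUnit_iff_residuePow_ne_zero {x : ZMod (p ^ n)} : IsUnit x ↔ residuePow p n x ≠ 0 := by
  rw [zmod_pow_isUnit_iff, residuePow, castHom_apply, cast_eq_val, Ne, natCast_eq_zero_iff]

theorem mem_maximalIdeal_iff_residuePow_eq_zero {x : ZMod (p ^ n)} :
    x ∈ maximalIdeal (ZMod (p ^ n)) ↔ residuePow p n x = 0 := by
  rw [mem_maximalIdeal, mem_nonunits_iff, isUnit_iff_residuePow_ne_zero, not_not]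

theorem pow_mul_unit_inj {k j : ℕ} {w w' : ZMod (p ^ n)} (hw : IsUnit w) (hw' : IsUnit w')
    (hk : k < n) (h : (p : ZMod (p ^ n)) ^ k * w = p ^ j * w') :
    k = j ∧ residuePow p n w = residuePow p n w' := by
  have key : ∀ {i l : ℕ} {u u' : ZMod (p ^ n)}, IsUnit u → i < l →
      (p : ZMod (p ^ n)) ^ i * u = p ^ l * u' → n ≤ i := by
    intro i l u u' hu hil e
    refine le_of_pow_mul_eq_zero (w := u - (p : ZMod (p ^ n)) ^ (l - i) * u') ?_ ?_
    · rwa [isUnit_iff_residuePow_ne_zero, map_sub, map_mul, map_pow, residuePow_natCast_self,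
        zero_pow (Nat.sub_ne_zero_of_lt hil), zero_mul, sub_zero, ← isUnit_iff_residuePow_ne_zero]
    · rw [mul_sub, e, ← mul_assoc, ← pow_add, Nat.add_sub_cancel' hil.le, sub_self]
  obtain hkj | rfl | hjk := lt_trichotomy k j
  · exact absurd (key hw hkj h) (not_le.mpr hk)
  · refine ⟨rfl, by_contra fun hne => ?_⟩
    have hu : IsUnit (w - w') := by
      rwa [isUnit_iff_residuePow_ne_zero, map_sub, sub_ne_zero]
    exact absurd (le_of_pow_mul_eq_zero hu (by rw [mul_sub, h, sub_self])) (not_le.mpr hk)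
  · exact absurd ((key hw' hjk h.symm).trans hjk.le) (not_le.mpr hk)

theorem isUnit_ordCompl_val {r : ZMod (p ^ n)} (hr : r ≠ 0) :
    IsUnit ((r.val / p ^ r.val.factorization p : ℕ) : ZMod (p ^ n)) := by
  rw [isUnit_iff_residuePow_ne_zero, map_natCast, Ne, natCast_eq_zero_iff]
  exact Nat.not_dvd_ordCompl Fact.out ((val_ne_zero r).mpr hr)

theorem exists_eq_pow_mul_unit {r : ZMod (p ^ n)} (hr : r ≠ 0) :
    ∃ k < n, ∃ w : (ZMod (p ^ n))ˣ, r = (p : ZMod (p ^ n)) ^ k * w := by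
  refine ⟨_, ?_, (isUnit_ordCompl_val hr).unit, eq_pow_factorization_mul r⟩
  by_contra hle
  have hpk : (p : ZMod (p ^ n)) ^ r.val.factorization p = 0 := by
    rw [← Nat.cast_pow, natCast_eq_zero_iff]
    exact pow_dvd_pow p (not_lt.mp hle)
  exact hr (by rw [eq_pow_factorization_mul r, hpk, zero_mul])

theorem card_ker_unitsMap :
    Nat.card (unitsMap (dvd_pow_self p (NeZero.ne n))).ker = p ^ (n - 1) := by
  have hp : p.Prime := Fact.out
  have h := Subgroup.card_mul_index (unitsMap (dvd_pow_self p (NeZero.ne n))).ker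
  rw [Subgroup.index_ker, MonoidHom.range_eq_top.mpr (unitsMap_surjective _), Subgroup.card_top,
    Nat.card_eq_fintype_card (α := (ZMod p)ˣ), Nat.card_eq_fintype_card (α := (ZMod (p ^ n))ˣ),
    card_units p, card_units_eq_totient,
    Nat.totient_prime_pow hp (Nat.pos_of_ne_zero (NeZero.ne n))] at h
  exact Nat.eq_of_mul_eq_mul_right (Nat.sub_pos_of_lt hp.one_lt) h

theorem exists_eq_mul_self_of_isSquare_residuePow (hp2 : p ≠ 2) (w : (ZMod (p ^ n))ˣ)
    (h : IsSquare (residuePow p n w)) : ∃ s : (ZMod (p ^ n))ˣ, w = s * s := by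
  set φ := unitsMap (dvd_pow_self p (NeZero.ne n))
  obtain ⟨c, hc⟩ := h
  have hc0 : c ≠ 0 := by
    rintro rfl
    exact isUnit_iff_residuePow_ne_zero.mp w.isUnit (by rw [hc, mul_zero])
  obtain ⟨C, hC⟩ := ZMod.ringHom_surjective (residuePow p n) c
  obtain ⟨C, rfl⟩ : IsUnit C := isUnit_iff_residuePow_ne_zero.mpr (hC ▸ hc0)
  have hwC : φ w = φ C * φ C := Units.ext (by
    change residuePow p n w = residuePow p n C * residuePow p n C
    rw [hC, hc])
  -- `w / C²` lies in the kernel of reduction, a group of odd order in which everything is a square.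
  have hker : w * (C * C)⁻¹ ∈ φ.ker := by
    rw [MonoidHom.mem_ker, map_mul, map_inv, map_mul, hwC, mul_inv_cancel]
  have hodd : (Nat.card φ.ker).Coprime 2 := by
    rw [card_ker_unitsMap]
    exact Nat.Coprime.pow_left _ ((Nat.coprime_primes Fact.out Nat.prime_two).mpr hp2)
  obtain ⟨k, hk⟩ := isSquare_of_coprime_card_two hodd ⟨_, hker⟩
  refine ⟨k * C, ?_⟩
  have hk' : w * (C * C)⁻¹ = k * k := congrArg Subtype.val hk
  rw [mul_mul_mul_comm]
  exact mul_inv_eq_iff_eq_mul.mp hk'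

theorem isSquare_one_add_of_mem_maximalIdeal (hp2 : p ≠ 2) {x : ZMod (p ^ n)}
    (hx : x ∈ maximalIdeal (ZMod (p ^ n))) : IsSquare (1 + x) := by
  rw [mem_maximalIdeal_iff_residuePow_eq_zero] at hx
  obtain ⟨u, hu⟩ : IsUnit (1 + x) := isUnit_iff_residuePow_ne_zero.mpr (by simp [hx])
  obtain ⟨s, rfl⟩ := exists_eq_mul_self_of_isSquare_residuePow hp2 u
    (by rw [hu, map_add, map_one, hx, add_zero]; exact IsSquare.one)
  exact ⟨s, by rw [← hu, Units.val_mul]⟩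

end ZMod

section SquareClasses

variable {p n : ℕ} [Fact p.Prime]

open ZMod

variable (p n) in
/-- Writing `r = pᵏ w` with `w` a unit, the index is `2k` or `2k + 1` according as `w` is a square
mod `p` or not; `r = 0` gets `2n`. -/
noncomputable def sqClassIndex (r : ZMod (p ^ n)) : ℕ :=
  if r = 0 then 2 * n
  else 2 * r.val.factorization p +
    if IsSquare ((r.val / p ^ r.val.factorization p : ℕ) : ZMod p) then 0 else 1

theorem sqClassIndex_zero : sqClassIndex p n 0 = 2 * n := if_pos rfl

variable [NeZero n]

theorem sqClassIndex_pow_mul {k : ℕ} (hk : k < n) (w : (ZMod (p ^ n))ˣ) :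
    sqClassIndex p n (p ^ k * w) = 2 * k + if IsSquare (residuePow p n w) then 0 else 1 := by
  have hr : (p : ZMod (p ^ n)) ^ k * w ≠ 0 := fun h =>
    absurd (le_of_pow_mul_eq_zero w.isUnit h) (not_le.mpr hk)
  obtain ⟨hk', hw'⟩ := pow_mul_unit_inj w.isUnit (isUnit_ordCompl_val hr) hk
    (eq_pow_factorization_mul _)
  rw [sqClassIndex, if_neg hr, hw', map_natCast, ← hk']

theorem sqClassIndex_lt_of_ne_zero {r : ZMod (p ^ n)} (hr : r ≠ 0) :
    sqClassIndex p n r < 2 * n := by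
  obtain ⟨k, hk, w, rfl⟩ := exists_eq_pow_mul_unit hr
  rw [sqClassIndex_pow_mul hk]
  split <;> omega

theorem sqClassIndex_units_mul_self_mul (s : (ZMod (p ^ n))ˣ) (r : ZMod (p ^ n)) :
    sqClassIndex p n (s * s * r) = sqClassIndex p n r := by
  rcases eq_or_ne r 0 with rfl | hr
  · rw [mul_zero]
  obtain ⟨k, hk, w, rfl⟩ := exists_eq_pow_mul_unit hr
  have hs : residuePow p n s ≠ 0 := isUnit_iff_residuePow_ne_zero.mp s.isUnit
  rw [show (s : ZMod (p ^ n)) * s * (p ^ k * w) = p ^ k * ↑(s * s * w) by push_cast; ring,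
    sqClassIndex_pow_mul hk, sqClassIndex_pow_mul hk]
  simp only [Units.val_mul, map_mul, isSquare_mul_self_mul_iff hs]

theorem exists_eq_units_mul_self_mul_of_sqClassIndex_eq (hp2 : p ≠ 2) {r r' : ZMod (p ^ n)}
    (h : sqClassIndex p n r = sqClassIndex p n r') : ∃ s : (ZMod (p ^ n))ˣ, r' = s * s * r := by
  rcases eq_or_ne r 0 with rfl | hr
  · rcases eq_or_ne r' 0 with rfl | hr'
    · exact ⟨1, by simp⟩
    · exact absurd h ((sqClassIndex_lt_of_ne_zero hr').trans_eq sqClassIndex_zero.symm).ne'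
  have hr' : r' ≠ 0 := by
    rintro rfl
    exact (sqClassIndex_lt_of_ne_zero hr).ne (h.trans sqClassIndex_zero)
  obtain ⟨k, hk, w, rfl⟩ := exists_eq_pow_mul_unit hr
  obtain ⟨k', hk', w', rfl⟩ := exists_eq_pow_mul_unit hr'
  rw [sqClassIndex_pow_mul hk, sqClassIndex_pow_mul hk'] at h
  obtain rfl : k = k' := by split_ifs at h <;> omega
  have hsq : IsSquare (residuePow p n w') ↔ IsSquare (residuePow p n w) := by
    split_ifs at h <;> simp_all
  obtain ⟨t, ht⟩ := exists_eq_mul_self_of_isSquare_residuePow hp2 (w' * w) (by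
    rw [Units.val_mul, map_mul]
    exact FiniteField.isSquare_mul_of_isSquare_iff (isUnit_iff_residuePow_ne_zero.mp w'.isUnit)
      (isUnit_iff_residuePow_ne_zero.mp w.isUnit) hsq)
  have hw' : w' = t * w⁻¹ * (t * w⁻¹) * w := by
    rw [eq_mul_inv_of_mul_eq ht, mul_mul_mul_comm, mul_assoc (t * t), inv_mul_cancel_right]
  exact ⟨t * w⁻¹, by rw [hw']; push_cast; ring⟩

theorem sqClassIndex_eq_iff (hp2 : p ≠ 2) {r r' : ZMod (p ^ n)} :
    sqClassIndex p n r = sqClassIndex p n r' ↔ ∃ s : (ZMod (p ^ n))ˣ, r' = s * s * r :=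
  ⟨exists_eq_units_mul_self_mul_of_sqClassIndex_eq hp2,
    fun ⟨s, hs⟩ => hs ▸ (sqClassIndex_units_mul_self_mul s r).symm⟩

theorem sqClassIndex_mem_Icc {r : ZMod (p ^ n)} (hr : r ∈ maximalIdeal (ZMod (p ^ n))) :
    sqClassIndex p n r ∈ Set.Icc 2 (2 * n) := by
  rcases eq_or_ne r 0 with rfl | hr0
  · have := NeZero.ne n
    rw [sqClassIndex_zero]
    constructor <;> omega
  obtain ⟨k, hk, w, rfl⟩ := exists_eq_pow_mul_unit hr0
  have hk0 : k ≠ 0 := by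
    rintro rfl
    rw [pow_zero, one_mul] at hr
    exact (mem_maximalIdeal _).mp hr w.isUnit
  rw [sqClassIndex_pow_mul hk]
  constructor <;> split <;> omega

theorem exists_mem_maximalIdeal_sqClassIndex_eq (hp2 : p ≠ 2) {j : ℕ}
    (hj : j ∈ Set.Icc 2 (2 * n)) :
    ∃ r ∈ maximalIdeal (ZMod (p ^ n)), sqClassIndex p n r = j := by
  obtain ⟨hj2, hjn⟩ := hj
  rcases hjn.eq_or_lt with rfl | hlt
  · exact ⟨0, zero_mem _, sqClassIndex_zero⟩
  obtain ⟨w, hw⟩ : ∃ w : (ZMod (p ^ n))ˣ,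
      (if IsSquare (residuePow p n w) then 0 else 1) = j % 2 := by
    rcases Nat.mod_two_eq_zero_or_one j with h | h
    · exact ⟨1, by simp [h]⟩
    · obtain ⟨g, hg⟩ := FiniteField.exists_nonsquare (F := ZMod p) (by rwa [ringChar_zmod_n])
      obtain ⟨G, rfl⟩ := ZMod.ringHom_surjective (residuePow p n) g
      obtain ⟨G, rfl⟩ : IsUnit G :=
        isUnit_iff_residuePow_ne_zero.mpr fun h0 => hg (h0 ▸ IsSquare.zero)
      exact ⟨G, by simp [hg, h]⟩
  refine ⟨p ^ (j / 2) * w, ?_, by rw [sqClassIndex_pow_mul (by omega), hw]; omega⟩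
  rw [mem_maximalIdeal_iff_residuePow_eq_zero, map_mul, map_pow, residuePow_natCast_self,
    zero_pow (by omega), zero_mul]

end SquareClasses

variable (p n) in
noncomputable def borelOrbitIndex [Fact p.Prime] (x : P1 (ZMod (p ^ n))) : ℕ :=
  (P1.slope x).elim 1 (sqClassIndex p n)

theorem mem_orbit_iff_borelOrbitIndex_eq {p n : ℕ} [Fact p.Prime] [NeZero n] (hp2 : p ≠ 2)
    (x y : P1 (ZMod (p ^ n))) :
    x ∈ orbit (Gamma0 (ZMod (p ^ n))) y ↔ borelOrbitIndex p n x = borelOrbitIndex p n y := by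
  have two_le : ∀ {z : P1 (ZMod (p ^ n))} {r}, P1.slope z = some r → 2 ≤ sqClassIndex p n r :=
    fun h => (sqClassIndex_mem_Icc (P1.slope_mem_maximalIdeal h)).1
  rw [Gamma0.mem_orbit_iff_slope (fun _ => ZMod.isSquare_one_add_of_mem_maximalIdeal hp2),
    borelOrbitIndex, borelOrbitIndex]
  cases hx : P1.slope x <;> cases hy : P1.slope y
  · simp
  · have := two_le hy
    simp only [Option.not_rel_some_none, Option.elim_none, Option.elim_some, false_iff]
    omega
  · have := two_le hx
    simp only [Option.not_rel_none_some, Option.elim_some, Option.elim_none, false_iff]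
    omega
  · simp only [Option.rel_some_some, Option.elim_some]
    exact (sqClassIndex_eq_iff hp2).symm.trans eq_comm

theorem range_borelOrbitIndex {p n : ℕ} [Fact p.Prime] [NeZero n] (hp2 : p ≠ 2) :
    Set.range (borelOrbitIndex p n) = Set.Icc 1 (2 * n) := by
  ext j
  constructor
  · rintro ⟨x, rfl⟩
    cases hx : P1.slope x with
    | none => simpa [borelOrbitIndex, hx] using NeZero.one_le
    | some r =>
      obtain ⟨h2, hn⟩ := sqClassIndex_mem_Icc (P1.slope_mem_maximalIdeal hx)
      simp only [borelOrbitIndex, hx, Option.elim_some, Set.mem_Icc]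
      omega
  · rintro ⟨h1, hjn⟩
    rcases h1.eq_or_lt with rfl | hlt
    · exact ⟨P1.mk ![0, 1] (isUnimodular_pair_right isUnit_one),
        by simp [borelOrbitIndex, P1.slope_mk_right]⟩
    · obtain ⟨r, hr, rfl⟩ := exists_mem_maximalIdeal_sqClassIndex_eq hp2 ⟨hlt, hjn⟩
      exact ⟨P1.mk ![1, r] (isUnimodular_pair_left isUnit_one),
        by simp [borelOrbitIndex, P1.slope_mk_one ((mem_maximalIdeal _).mp hr)]⟩

/-- For an odd prime `p` and `n ≥ 1`, the Borel subgroup `Γ₀(ℤ/pⁿℤ)` has exactly `2n`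
orbits on `ℙ¹(ℤ/pⁿℤ)`. -/
theorem card_borel_orbits_P1 (p : ℕ) [Fact p.Prime] (hp2 : p ≠ 2) (n : ℕ) [NeZero n] :
    Nat.card (MulAction.orbitRel.Quotient (Gamma0 (ZMod (p ^ n))) (P1 (ZMod (p ^ n))))
      = 2 * n := by
  rw [card_orbitRel_quotient_eq_card_range _ (mem_orbit_iff_borelOrbitIndex_eq hp2),
    range_borelOrbitIndex hp2]
  simp
end

section
/- Let p be an odd prime and n ≥ 2. Define the sequence K₀ = 1, K₁ = p+1, and K_m = a_m·K_{m-1} − 4·K_{m-2} for 2 ≤ m ≤ 2n−1, where a_{2k} = 4 for 1 ≤ k ≤ n−1, a_{2k+1} = (p+1)²/p for 1 ≤ k < n−1 (so that K_{2k+1} = ((p+1)²·K_{2k} − 4p·K_{2k-1})/p), and a_{2n-1} = p+1. Then K_{2k} = 2^{2k}·p^k for 1 ≤ k ≤ n−1, K_{2k+1} = 2^{2k}·(p^{k+1} + p^k) for 1 ≤ k < n−1, and K_{2n-1} = 2^{2n-2}·(pⁿ − p^{n-2}). -/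
/-- The continuant computation for the tridiagonal monodromy matrix of `X₀(pⁿM)`:
with `K₀ = 1`, `K₁ = p+1`, the even recurrence `K_{2k} = 4K_{2k-1} - 4K_{2k-2}`, the odd
recurrence `p·K_{2k+1} = (p+1)²K_{2k} - 4p·K_{2k-1}` and the last step
`K_{2n-1} = (p+1)K_{2n-2} - 4K_{2n-3}`, one has `K_{2k} = 2^{2k}p^k`,
`K_{2k+1} = 2^{2k}(p^{k+1} + p^k)` and `K_{2n-1} = 2^{2n-2}(pⁿ - p^{n-2})`. -/
theorem continuants_of_tridiagonal_monodromy (p : ℕ) (hp : p.Prime) (hodd : p ≠ 2)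
    (n : ℕ) (hn : 2 ≤ n) (K : ℕ → ℤ)
    (h0 : K 0 = 1) (h1 : K 1 = (p : ℤ) + 1)
    (heven : ∀ k, 1 ≤ k → k ≤ n - 1 →
      K (2 * k) = 4 * K (2 * k - 1) - 4 * K (2 * k - 2))
    (hoddrec : ∀ k, 1 ≤ k → k < n - 1 →
      (p : ℤ) * K (2 * k + 1) = ((p : ℤ) + 1) ^ 2 * K (2 * k) - 4 * p * K (2 * k - 1))
    (hlast : K (2 * n - 1) = ((p : ℤ) + 1) * K (2 * n - 2) - 4 * K (2 * n - 3)) :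
    (∀ k, 1 ≤ k → k ≤ n - 1 → K (2 * k) = 2 ^ (2 * k) * (p : ℤ) ^ k) ∧
    (∀ k, 1 ≤ k → k < n - 1 → K (2 * k + 1) = 2 ^ (2 * k) * ((p : ℤ) ^ (k + 1) + (p : ℤ) ^ k)) ∧
    K (2 * n - 1) = 2 ^ (2 * n - 2) * ((p : ℤ) ^ n - (p : ℤ) ^ (n - 2)) := by
  have hp0 : (p : ℤ) ≠ 0 := by exact_mod_cast hp.pos.ne'
  have main : ∀ k, 1 ≤ k → k ≤ n - 1 →
      K (2 * k) = 2 ^ (2 * k) * (p : ℤ) ^ k ∧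
      (k < n - 1 → K (2 * k + 1) = 2 ^ (2 * k) * ((p : ℤ) ^ (k + 1) + (p : ℤ) ^ k)) := by
    intro k
    induction k with
    | zero => intro h; omega
    | succ k ih =>
      intro _ hle
      have he := heven (k + 1) (by omega) hle
      have h2 : 2 * (k + 1) - 1 = 2 * k + 1 := by omega
      have h3 : 2 * (k + 1) - 2 = 2 * k := by omega
      rw [h2, h3] at he
      have heval : K (2 * (k + 1)) = 2 ^ (2 * (k + 1)) * (p : ℤ) ^ (k + 1) := by
        rcases Nat.eq_zero_or_pos k with hk0 | hk1
        · subst hk0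
          rw [he, h1, h0]; ring
        · obtain ⟨ihe, iho⟩ := ih hk1 (by omega)
          rw [he, iho (by omega), ihe]
          have : 2 * (k + 1) = 2 * k + 2 := by omega
          rw [this]; ring
      refine ⟨heval, fun hlt => ?_⟩
      have ho := hoddrec (k + 1) (by omega) hlt
      rw [h2, heval] at ho
      have hKodd : K (2 * k + 1) = 2 ^ (2 * k) * ((p : ℤ) ^ (k + 1) + (p : ℤ) ^ k) := by
        rcases Nat.eq_zero_or_pos k with hk0 | hk1
        · subst hk0; simpa using h1
        · exact (ih hk1 (by omega)).2 (by omega)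
      rw [hKodd] at ho
      apply mul_left_cancel₀ hp0
      rw [ho]
      have : 2 * (k + 1) = 2 * k + 2 := by omega
      rw [this]; ring
  refine ⟨fun k h1k h2k => (main k h1k h2k).1, fun k h1k h2k => (main k h1k (by omega)).2 h2k, ?_⟩
  have h2 : 2 * n - 2 = 2 * (n - 1) := by omega
  have hKe : K (2 * n - 2) = 2 ^ (2 * (n - 1)) * (p : ℤ) ^ (n - 1) := by
    rw [h2]; exact (main (n - 1) (by omega) le_rfl).1
  rcases Nat.lt_or_ge n 3 with hn3 | hn3
  · have hn2 : n = 2 := by omega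
    subst hn2
    norm_num at hlast hKe ⊢
    rw [hlast, hKe, h1]; ring
  · obtain ⟨m, rfl⟩ : ∃ m, n = m + 2 := ⟨n - 2, by omega⟩
    have h3 : 2 * (m + 2) - 3 = 2 * m + 1 := by omega
    have hKo : K (2 * (m + 2) - 3) = 2 ^ (2 * m) * ((p : ℤ) ^ (m + 1) + (p : ℤ) ^ m) := by
      rw [h3]; exact (main m (by omega) (by omega)).2 (by omega)
    rw [hlast, hKe, hKo]
    have e1 : 2 * (m + 2) - 2 = 2 * m + 2 := by omega
    have e2 : m + 2 - 1 = m + 1 := by omega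
    have e3 : m + 2 - 2 = m := by omega
    rw [e1, e2, e3]
    ring
end

section
/- Let p be an odd prime and n ≥ 2. The determinant of the (2n−1)×(2n−1) tridiagonal matrix A_int with main diagonal (2𝒪+2ℬ, 4𝒪, 4𝒪+2ℰ, 4𝒪, …, 4𝒪+2ℰ, 4𝒪, 2𝒪+2ℬ) and all off-diagonal entries 2𝒪, where 𝒪 = 2p^{n-2}, ℬ = (p−1)p^{n-2}, ℰ = (p−1)²p^{n-3}, equals 2^{4n-3}·(pⁿ − p^{n-2})·p^{(n-2)(2n-1)} in absolute value. -/
def tri (d : ℕ → ℤ) (o : ℤ) (m : ℕ) : Matrix (Fin m) (Fin m) ℤ :=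
  Matrix.of fun i j =>
    if (i : ℕ) = (j : ℕ) then d i
    else if (i : ℕ) + 1 = (j : ℕ) ∨ (j : ℕ) + 1 = (i : ℕ) then o else 0

lemma det_tri_succ (d : ℕ → ℤ) (o e : ℤ) (m : ℕ)
    (A : Matrix (Fin (m + 2)) (Fin (m + 2)) ℤ)
    (hA : ∀ i j : Fin (m + 2), A i j =
      if (i : ℕ) = (j : ℕ) then (if (i : ℕ) = m + 1 then e else d i)
      else if (i : ℕ) + 1 = (j : ℕ) ∨ (j : ℕ) + 1 = (i : ℕ) then o else 0) :
    A.det = e * (tri d o (m + 1)).det - o ^ 2 * (tri d o m).det := by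
  have hlast : ((Fin.last (m + 1) : Fin (m + 2)) : ℕ) = m + 1 := rfl
  have hj₀lt : m < m + 2 := by omega
  set j₀ : Fin (m + 2) := ⟨m, hj₀lt⟩ with hj₀
  have hj₀v : (j₀ : ℕ) = m := rfl
  have hj₀cast : j₀ = (Fin.last m).castSucc := rfl
  rw [Matrix.det_succ_row A (Fin.last (m + 1))]
  rw [Finset.sum_eq_add_of_mem j₀ (Fin.last (m + 1)) (Finset.mem_univ _) (Finset.mem_univ _)
    (by intro h; have := congrArg (Fin.val) h; simp [hj₀v, hlast] at this)
    (by
      intro c _ hc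
      have hc1 : (c : ℕ) ≠ m := fun h => hc.1 (Fin.ext (by simp [hj₀v, h]))
      have hc2 : (c : ℕ) ≠ m + 1 := fun h => hc.2 (Fin.ext (by simp [h]))
      have hcle : (c : ℕ) < m + 2 := c.isLt
      have : A (Fin.last (m + 1)) c = 0 := by
        rw [hA]; simp only [hlast]
        rw [if_neg (by omega), if_neg (by omega)]
      rw [this]; ring)]
  -- term at last column
  have hsub_last : A.submatrix (Fin.last (m + 1)).succAbove (Fin.last (m + 1)).succAbove
      = tri d o (m + 1) := by
    ext i j
    rw [Fin.succAbove_last, Matrix.submatrix_apply, hA]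
    have hi : ((Fin.castSucc i : Fin (m+2)) : ℕ) = (i : ℕ) := rfl
    have hj : ((Fin.castSucc j : Fin (m+2)) : ℕ) = (j : ℕ) := rfl
    simp only [hi, hj, tri, Matrix.of_apply]
    have h1 := i.isLt
    have h2 := j.isLt
    split_ifs <;> first | rfl | omega
  have hAle : A (Fin.last (m + 1)) (Fin.last (m + 1)) = e := by
    rw [hA]; simp [hlast]
  -- term at j₀
  have hAj₀ : A (Fin.last (m + 1)) j₀ = o := by
    rw [hA, hlast, hj₀v, if_neg (by omega), if_pos (by omega)]
  set B := A.submatrix (Fin.last (m + 1)).succAbove j₀.succAbove with hB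
  have hBentry : ∀ (i : Fin (m + 1)) (j : Fin (m + 1)),
      B i j = A (Fin.castSucc i) (j₀.succAbove j) := by
    intro i j; rw [hB, Matrix.submatrix_apply, Fin.succAbove_last]
  have hsuccAbove : ∀ j : Fin (m + 1), ((j₀.succAbove j : Fin (m + 2)) : ℕ)
      = if (j : ℕ) < m then (j : ℕ) else (j : ℕ) + 1 := by
    intro j
    rcases lt_or_ge ((j : ℕ)) m with h | h
    · rw [Fin.succAbove_of_castSucc_lt _ _ (by simp [Fin.lt_def, hj₀v, h])]
      rw [Fin.coe_castSucc, if_pos h]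
    · rw [Fin.succAbove_of_le_castSucc _ _ (by simp [Fin.le_def, hj₀v, h])]
      rw [Fin.val_succ, if_neg (not_lt.mpr h)]
  have hdetB : B.det = o * (tri d o m).det := by
    rw [Matrix.det_succ_column B (Fin.last m)]
    rw [Finset.sum_eq_single (Fin.last m)]
    · have h1 : B (Fin.last m) (Fin.last m) = o := by
        rw [hBentry]
        rw [hA]
        have hsv : ((j₀.succAbove (Fin.last m) : Fin (m+2)) : ℕ) = m + 1 := by
          rw [hsuccAbove]; simp
        simp only [hsv]
        have : ((Fin.castSucc (Fin.last m) : Fin (m+2)) : ℕ) = m := rfl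
        rw [this, if_neg (by omega), if_pos (by omega)]
      have h2 : B.submatrix (Fin.last m).succAbove (Fin.last m).succAbove = tri d o m := by
        ext i j
        rw [Matrix.submatrix_apply, Fin.succAbove_last, hBentry, hA]
        have hiv : ((Fin.castSucc (Fin.castSucc i) : Fin (m+2)) : ℕ) = (i : ℕ) := rfl
        have hjv : ((j₀.succAbove (Fin.castSucc j) : Fin (m+2)) : ℕ) = (j : ℕ) := by
          rw [hsuccAbove]
          have := j.isLt
          rw [Fin.coe_castSucc, if_pos (by omega)]
        simp only [hiv, hjv, tri, Matrix.of_apply]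
        have h1 := i.isLt
        have h2 := j.isLt
        split_ifs <;> first | rfl | omega
      rw [h1, h2]
      have hv : ((Fin.last m : Fin (m+1)) : ℕ) = m := rfl
      rw [hv]
      have : (-1 : ℤ) ^ (m + m) = 1 := by
        rw [← two_mul, pow_mul]; norm_num
      rw [this]; ring
    · intro i _ hi
      have hiv : (i : ℕ) ≠ m := fun h => hi (Fin.ext (by simp [h]))
      have : B i (Fin.last m) = 0 := by
        rw [hBentry, hA]
        have hjv : ((j₀.succAbove (Fin.last m) : Fin (m+2)) : ℕ) = m + 1 := by
          rw [hsuccAbove]; simp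
        have hcv : ((Fin.castSucc i : Fin (m+2)) : ℕ) = (i : ℕ) := rfl
        simp only [hjv, hcv]
        have hlt : (i : ℕ) < m + 1 := i.isLt
        rw [if_neg (by omega), if_neg (by omega)]
      rw [this]; ring
    · intro h; exact absurd (Finset.mem_univ _) h
  rw [hsub_last, hAle, hAj₀, hdetB, hlast, hj₀v]
  have h1 : (-1 : ℤ) ^ (m + 1 + (m + 1)) = 1 := by
    have : m + 1 + (m + 1) = 2 * (m + 1) := by ring
    rw [this, pow_mul]; norm_num
  have h2 : (-1 : ℤ) ^ (m + 1 + m) = -1 := by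
    have : m + 1 + m = 2 * m + 1 := by ring
    rw [this, pow_succ, pow_mul]; norm_num
  rw [h1, h2]; ring

lemma tri_det_zero (d : ℕ → ℤ) (o : ℤ) : (tri d o 0).det = 1 := Matrix.det_fin_zero

lemma tri_det_one (d : ℕ → ℤ) (o : ℤ) : (tri d o 1).det = d 0 := by
  rw [Matrix.det_fin_one]; rfl

lemma tri_det_rec (d : ℕ → ℤ) (o : ℤ) (m : ℕ) :
    (tri d o (m + 2)).det = d (m + 1) * (tri d o (m + 1)).det - o ^ 2 * (tri d o m).det := by
  refine det_tri_succ d o (d (m + 1)) m _ (fun i j => ?_)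
  show (if (i : ℕ) = (j : ℕ) then d i else _) = _
  by_cases h : (i : ℕ) = (j : ℕ)
  · rw [if_pos h, if_pos h]
    by_cases h2 : (i : ℕ) = m + 1
    · rw [if_pos h2, h2]
    · rw [if_neg h2]
  · rw [if_neg h, if_neg h]

lemma tri_det_pattern (p q : ℤ) (d : ℕ → ℤ)
    (hd0 : d 0 = 2 * q * (p + 1))
    (hodd : ∀ i, i % 2 = 1 → d i = 8 * q) (k : ℕ)
    (hev : ∀ i, i % 2 = 0 → 0 < i → i ≤ 2 * k → d i * p = 2 * q * (p + 1) ^ 2) :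
    (tri d (4 * q) (2 * k + 1)).det = 2 ^ (4 * k + 1) * q ^ (2 * k + 1) * (p + 1) * p ^ k ∧
    (tri d (4 * q) (2 * k + 2)).det = 2 ^ (4 * k + 4) * q ^ (2 * k + 2) * p ^ (k + 1) := by
  induction k with
  | zero =>
    constructor
    · rw [show 2 * 0 + 1 = 1 from rfl, tri_det_one, hd0]; ring
    · rw [show 2 * 0 + 2 = 0 + 2 from rfl, tri_det_rec, tri_det_one, tri_det_zero, hd0,
        hodd 1 rfl]
      ring
  | succ k ih =>
    obtain ⟨h1, h2⟩ := ih (fun i a b c => hev i a b (by omega))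
    have hC : d (2 * k + 2) * p = 2 * q * (p + 1) ^ 2 :=
      hev (2 * k + 2) (by omega) (by omega) (by omega)
    have h3 : (tri d (4 * q) (2 * (k + 1) + 1)).det
        = 2 ^ (4 * (k + 1) + 1) * q ^ (2 * (k + 1) + 1) * (p + 1) * p ^ (k + 1) := by
      rw [show 2 * (k + 1) + 1 = (2 * k + 1) + 2 from by ring, tri_det_rec,
        show (2 * k + 1) + 1 = 2 * k + 2 from rfl, h2, h1]
      linear_combination (2 ^ (4 * k + 4) * q ^ (2 * k + 2) * p ^ k) * hC
    refine ⟨h3, ?_⟩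
    rw [show 2 * (k + 1) + 2 = (2 * k + 2) + 2 from by ring, tri_det_rec,
      show (2 * k + 2) + 1 = 2 * (k + 1) + 1 from by ring, h3, hodd (2 * (k + 1) + 1) (by omega),
      h2]
    ring




/-- The internal monodromy matrix `A_int` of `X₀(pⁿM)`: the `(2n-1)×(2n-1)` tridiagonal
matrix with main diagonal `(2𝒪+2ℬ, 4𝒪, 4𝒪+2ℰ, 4𝒪, …, 4𝒪+2ℰ, 4𝒪, 2𝒪+2ℬ)` and all
off-diagonal entries `2𝒪`, where `𝒪 = 2p^{n-2}`, `ℬ = (p-1)p^{n-2}` and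
`ℰ = (p-1)²p^{n-3}`. -/
def Aint (p n : ℕ) : Matrix (Fin (2 * n - 1)) (Fin (2 * n - 1)) ℤ := fun i j =>
  if (i : ℕ) = (j : ℕ) then
    (if (i : ℕ) = 0 ∨ (i : ℕ) = 2 * n - 2 then
      2 * (2 * (p : ℤ) ^ (n - 2)) + 2 * (((p : ℤ) - 1) * (p : ℤ) ^ (n - 2))
    else if (i : ℕ) % 2 = 1 then 4 * (2 * (p : ℤ) ^ (n - 2))
    else 4 * (2 * (p : ℤ) ^ (n - 2)) + 2 * (((p : ℤ) - 1) ^ 2 * (p : ℤ) ^ (n - 3)))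
  else if (i : ℕ) + 1 = (j : ℕ) ∨ (j : ℕ) + 1 = (i : ℕ) then 2 * (2 * (p : ℤ) ^ (n - 2))
  else 0

/-- The determinant of the internal monodromy matrix `A_int` equals
`2^{4n-3}(pⁿ - p^{n-2})p^{(n-2)(2n-1)}` in absolute value. -/
theorem abs_det_Aint (p : ℕ) (hp : p.Prime) (hodd : p ≠ 2) (n : ℕ) (hn : 2 ≤ n) :
    (Aint p n).det.natAbs = 2 ^ (4 * n - 3) * (p ^ n - p ^ (n - 2)) * p ^ ((n - 2) * (2 * n - 1)) := by
  obtain ⟨k, rfl⟩ : ∃ k, n = k + 2 := ⟨n - 2, by omega⟩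
  set P : ℤ := (p : ℤ) with hP
  set d : ℕ → ℤ := fun i =>
    if i = 0 then 2 * (2 * P ^ k) + 2 * ((P - 1) * P ^ k)
    else if i % 2 = 1 then 4 * (2 * P ^ k)
    else 4 * (2 * P ^ k) + 2 * ((P - 1) ^ 2 * P ^ (k - 1)) with hd
  set E : ℤ := 2 * (2 * P ^ k) + 2 * ((P - 1) * P ^ k) with hE
  have hAeq : ∀ i j : Fin ((2 * k + 1) + 2), Aint p (k + 2) i j =
      if (i : ℕ) = (j : ℕ) then (if (i : ℕ) = (2 * k + 1) + 1 then E else d i)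
      else if (i : ℕ) + 1 = (j : ℕ) ∨ (j : ℕ) + 1 = (i : ℕ) then 2 * (2 * P ^ k) else 0 := by
    intro i j
    have hi := i.isLt
    show (if (i : ℕ) = (j : ℕ) then
      (if (i : ℕ) = 0 ∨ (i : ℕ) = 2 * (k + 2) - 2 then
        2 * (2 * P ^ (k + 2 - 2)) + 2 * ((P - 1) * P ^ (k + 2 - 2))
      else if (i : ℕ) % 2 = 1 then 4 * (2 * P ^ (k + 2 - 2))
      else 4 * (2 * P ^ (k + 2 - 2)) + 2 * ((P - 1) ^ 2 * P ^ (k + 2 - 3)))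
      else if (i : ℕ) + 1 = (j : ℕ) ∨ (j : ℕ) + 1 = (i : ℕ) then 2 * (2 * P ^ (k + 2 - 2))
      else 0) = _
    have e2 : k + 2 - 2 = k := rfl
    have e3 : k + 2 - 3 = k - 1 := rfl
    have e4 : 2 * (k + 2) - 2 = 2 * k + 2 := by omega
    rw [e2, e3, e4]
    simp only [hd, hE]
    split_ifs <;> first | rfl | omega
  have ho : (2 * (2 * P ^ k)) = 4 * P ^ k := by ring
  have hdet := det_tri_succ d (2 * (2 * P ^ k)) E (2 * k + 1) (Aint p (k + 2)) hAeq
  rw [ho] at hdet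
  obtain ⟨hT1, hT2⟩ := tri_det_pattern P (P ^ k) d (by simp only [hd, hE, if_true]; ring)
    (fun i h => by simp only [hd]; rw [if_neg (by omega), if_pos h]; ring) k
    (fun i h hpos hle => by
      obtain ⟨k', rfl⟩ : ∃ k', k = k' + 1 := ⟨k - 1, by omega⟩
      simp only [hd]
      rw [if_neg (by omega), if_neg (by omega)]
      have : k' + 1 - 1 = k' := rfl
      rw [this, pow_succ]
      ring)
  rw [hT1, hT2] at hdet
  have halg : E * (2 ^ (4 * k + 4) * (P ^ k) ^ (2 * k + 2) * P ^ (k + 1)) -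
      (4 * P ^ k) ^ 2 * (2 ^ (4 * k + 1) * (P ^ k) ^ (2 * k + 1) * (P + 1) * P ^ k)
      = 2 ^ (4 * k + 5) * P ^ (k * (2 * k + 3)) * (P ^ (k + 2) - P ^ k) := by
    rw [hE, ← pow_mul, ← pow_mul]
    ring
  have hdetval : (Aint p (k + 2)).det
      = 2 ^ (4 * k + 5) * P ^ (k * (2 * k + 3)) * (P ^ (k + 2) - P ^ k) := hdet.trans halg
  have hle : p ^ k ≤ p ^ (k + 2) := Nat.pow_le_pow_right hp.pos (by omega)
  have hcast : ((2 ^ (4 * k + 5) * (p ^ (k + 2) - p ^ k) * p ^ (k * (2 * k + 3)) : ℕ) : ℤ)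
      = (Aint p (k + 2)).det := by
    rw [hdetval]
    push_cast [hle]
    ring
  have h2 := congrArg Int.natAbs hcast
  rw [Int.natAbs_natCast] at h2
  rw [← h2]
  rw [show 4 * (k + 2) - 3 = 4 * k + 5 from by omega, show k + 2 - 2 = k from rfl,
    show 2 * (k + 2) - 1 = 2 * k + 3 from by omega]
end
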